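/- arXiv:2310.07192 — 3 statements merged into one kernel-verified Lean document; each statement's English description precedes it below -/
import Mathlib

section
/- Let M be an invertible real 3×3 matrix, 𝔚(w) = w/(1+|Mw|²)^{1/2}, and m ≥ 1. Then 𝔚 restricted to the open ball {w ∈ ℝ³ : |w| < m} is a C^∞ diffeomorphism onto its image, and there exists N = N(M) > 0, independent of m, such that for j = 1, 2, 3, sup over v ∈ 𝔚({|w| < m}) of |Dʲ(𝔚⁻¹)(v)| is at most N·m^{2j+1}. -/
/-!
STATEMENT 2: Let M be an invertible real 3×3 matrix, 𝔚(w) = w/(1+|Mw|²)^{1/2}, and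
m ≥ 1. Then 𝔚 restricted to the open ball {w ∈ ℝ³ : |w| < m} is a C^∞ diffeomorphism
onto its image, and there exists N = N(M) > 0, independent of m, such that for
j = 1, 2, 3, sup over v ∈ 𝔚({|w| < m}) of |Dʲ(𝔚⁻¹)(v)| is at most N·m^{2j+1}.
(The inverse of the restriction of 𝔚 is the map v ↦ v/(1−|Mv|²)^{1/2}.)
-/

noncomputable section
open Real Matrix
open scoped ENNReal NNReal

abbrev E3 : Type := EuclideanSpace ℝ (Fin 3)

def toE3 (v : Fin 3 → ℝ) : E3 := WithLp.toLp 2 v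

/-- The map `𝔚(w) = w / (1 + |M w|²)^{1/2}`. -/
def frakW (M : Matrix (Fin 3) (Fin 3) ℝ) (w : E3) : E3 :=
  (Real.sqrt (1 + ‖toE3 (M.mulVec w)‖ ^ 2))⁻¹ • w

/-- The inverse map `v ↦ v / (1 − |M v|²)^{1/2}`. -/
def invW (M : Matrix (Fin 3) (Fin 3) ℝ) (v : E3) : E3 :=
  (Real.sqrt (1 - ‖toE3 (M.mulVec v)‖ ^ 2))⁻¹ • v

/-!
With `L v = M v`, the map `v ↦ v / (1 - |L v|²)^{1/2}` inverts `𝔚` on the open set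
`{|L v| < 1}`, which contains `𝔚(ℝ³)`. Writing this inverse as
`φ • id` with `φ = (1 - |L ·|²)^{-1/2}`, Leibniz and Faà di Bruno bound `Dʲ𝔚⁻¹(v)` by a constant
times `t^{-1/2-j}·max(|v|, 1)`, where `t = 1 - |L v|²`. For `v = 𝔚 w` with `|w| < m` one has
`t⁻¹ = 1 + |L w|² ≤ (1 + ‖L‖²) m²`, which produces the factor `m^{2j+1}`, and `|v| ≤ ‖M⁻¹‖`
because `|M v| < 1`.
-/

open Set Metric Nat

lemma ContinuousLinearMap.norm_iteratedFDeriv_le {𝕜 E F : Type*} [NontriviallyNormedField 𝕜]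
    [NormedAddCommGroup E] [NormedSpace 𝕜 E] [NormedAddCommGroup F] [NormedSpace 𝕜 F]
    (L : E →L[𝕜] F) (k : ℕ) (x : E) :
    ‖iteratedFDeriv 𝕜 k L x‖ ≤ max ‖L x‖ ‖L‖ := by
  rcases k with _ | _ | k
  · simp
  · simp [L.fderiv]
  · rw [← norm_iteratedFDeriv_fderiv, show fderiv 𝕜 L = fun _ => L from funext fun _ => L.fderiv,
      iteratedFDeriv_const_of_ne k.succ_ne_zero]
    simp

lemma abs_descPochhammer_eval_le_factorial (n : ℕ) {r : ℝ} (h₁ : -1 ≤ r) (h₀ : r ≤ 0) :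
    |(descPochhammer ℝ n).eval r| ≤ n ! := by
  rw [descPochhammer_eval_eq_prod_range, Finset.abs_prod, ← Finset.prod_range_add_one_eq_factorial]
  push_cast
  gcongr with i
  rw [abs_of_nonpos (by linarith [i.cast_nonneg (α := ℝ)])]
  linarith

lemma norm_iteratedFDerivWithin_inv_sqrt_le (n : ℕ) {t : ℝ} (ht : 0 < t) :
    ‖iteratedFDerivWithin ℝ n (fun u : ℝ => (√u)⁻¹) (Ioi 0) t‖ ≤ n ! * t ^ (-(1 / 2) - n : ℝ) := by
  have hrpow : EqOn (fun u : ℝ => (√u)⁻¹) (fun u => u ^ (-(1 / 2) : ℝ)) (Ioi 0) := fun u hu => by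
    simp [Real.sqrt_eq_rpow, Real.rpow_neg (le_of_lt hu)]
  rw [iteratedFDerivWithin_congr hrpow ht, norm_iteratedFDerivWithin_eq_norm_iteratedDerivWithin,
    iteratedDerivWithin_eq_iteratedDeriv (uniqueDiffOn_Ioi 0)
      (Real.contDiffAt_rpow_const (Or.inl ht.ne')) ht,
    iteratedDeriv_eq_iterate, Real.iter_deriv_rpow_const, norm_mul, Real.norm_eq_abs,
    Real.norm_of_nonneg (Real.rpow_nonneg ht.le _)]
  gcongr
  exact abs_descPochhammer_eval_le_factorial n (by norm_num) (by norm_num)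

section Maps
variable {E F : Type*} [NormedAddCommGroup E] [NormedSpace ℝ E]
  [NormedAddCommGroup F] [InnerProductSpace ℝ F] (L : E →L[ℝ] F)

omit [InnerProductSpace ℝ F] in
lemma one_sub_norm_sq_pos {x : F} (hx : ‖x‖ < 1) : 0 < 1 - ‖x‖ ^ 2 :=
  sub_pos.2 (pow_lt_one₀ (norm_nonneg x) hx two_ne_zero)

def contractMap (w : E) : E := (√(1 + ‖L w‖ ^ 2))⁻¹ • w

def expandMap (v : E) : E := (√(1 - ‖L v‖ ^ 2))⁻¹ • v

lemma one_sub_norm_sq_apply_contractMap (w : E) :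
    1 - ‖L (contractMap L w)‖ ^ 2 = (1 + ‖L w‖ ^ 2)⁻¹ := by
  have hs : √(1 + ‖L w‖ ^ 2) ^ 2 = 1 + ‖L w‖ ^ 2 := Real.sq_sqrt (by positivity)
  rw [contractMap, map_smul, norm_smul, mul_pow, Real.norm_eq_abs, sq_abs, inv_pow, hs]
  field_simp
  ring

lemma norm_apply_contractMap_lt_one (w : E) : ‖L (contractMap L w)‖ < 1 := by
  have h := one_sub_norm_sq_apply_contractMap L w
  have : 0 < (1 + ‖L w‖ ^ 2)⁻¹ := by positivity
  nlinarith [norm_nonneg (L (contractMap L w))]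

lemma expandMap_contractMap (w : E) : expandMap L (contractMap L w) = w := by
  have hs : √(1 + ‖L w‖ ^ 2) ≠ 0 := by positivity
  rw [expandMap, one_sub_norm_sq_apply_contractMap, Real.sqrt_inv, inv_inv, contractMap,
    smul_smul, mul_inv_cancel₀ hs, one_smul]

lemma contractMap_expandMap {v : E} (hv : ‖L v‖ < 1) : contractMap L (expandMap L v) = v := by
  have ht : 0 < 1 - ‖L v‖ ^ 2 := one_sub_norm_sq_pos hv
  have hs : √(1 - ‖L v‖ ^ 2) ^ 2 = 1 - ‖L v‖ ^ 2 := Real.sq_sqrt ht.le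
  have hone_add : 1 + ‖L (expandMap L v)‖ ^ 2 = (1 - ‖L v‖ ^ 2)⁻¹ := by
    rw [expandMap, map_smul, norm_smul, mul_pow, Real.norm_eq_abs, sq_abs, inv_pow, hs]
    field_simp
    ring
  rw [contractMap, hone_add, Real.sqrt_inv, inv_inv, expandMap, smul_smul,
    mul_inv_cancel₀ (Real.sqrt_pos.2 ht).ne', one_smul]

lemma image_contractMap_ball (m : ℝ) :
    contractMap L '' ball 0 m = {v | ‖L v‖ < 1} ∩ expandMap L ⁻¹' ball 0 m := by
  ext v
  constructor
  · rintro ⟨w, hw, rfl⟩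
    exact ⟨norm_apply_contractMap_lt_one L w, by simpa [expandMap_contractMap] using hw⟩
  · rintro ⟨hv, hvm⟩
    exact ⟨expandMap L v, hvm, contractMap_expandMap L hv⟩

lemma contDiff_contractMap : ContDiff ℝ (⊤ : ℕ∞) (contractMap L) := by
  refine contDiff_iff_contDiffAt.2 fun w => ?_
  have hpos : 0 < 1 + ‖L w‖ ^ 2 := by positivity
  exact ((((contDiff_const.add (L.contDiff.norm_sq ℝ)).contDiffAt).sqrt hpos.ne').inv
    (Real.sqrt_pos.2 hpos).ne').smul contDiffAt_id

lemma contDiffOn_inv_sqrt_one_sub :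
    ContDiffOn ℝ (⊤ : ℕ∞) (fun v => (√(1 - ‖L v‖ ^ 2))⁻¹) {v | ‖L v‖ < 1} := fun v hv => by
  have hpos : 0 < 1 - ‖L v‖ ^ 2 := one_sub_norm_sq_pos hv.out
  exact (((contDiff_const.sub (L.contDiff.norm_sq ℝ)).contDiffAt.sqrt hpos.ne').inv
    (Real.sqrt_pos.2 hpos).ne').contDiffWithinAt

lemma contDiffOn_expandMap : ContDiffOn ℝ (⊤ : ℕ∞) (expandMap L) {v | ‖L v‖ < 1} :=
  (contDiffOn_inv_sqrt_one_sub L).smul contDiffOn_id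

lemma isOpen_setOf_norm_apply_lt_one : IsOpen {v : E | ‖L v‖ < 1} :=
  isOpen_lt (by fun_prop) continuous_const

lemma isOpen_image_contractMap_ball (m : ℝ) : IsOpen (contractMap L '' ball 0 m) := by
  rw [image_contractMap_ball]
  exact (contDiffOn_expandMap L).continuousOn.isOpen_inter_preimage
    (isOpen_setOf_norm_apply_lt_one L) isOpen_ball

lemma norm_iteratedFDeriv_norm_sq_comp_le (n : ℕ) (x : E) :
    ‖iteratedFDeriv ℝ n (fun v => ‖L v‖ ^ 2) x‖ ≤ 2 ^ n * max ‖L x‖ ‖L‖ ^ 2 := by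
  have hinner : (fun v => ‖L v‖ ^ 2) = fun v => innerSL ℝ (L v) (L v) := by
    ext v; simp
  rw [hinner]
  refine ((innerSL ℝ).norm_iteratedFDeriv_le_of_bilinear_of_le_one (N := (⊤ : ℕ∞)) L.contDiff
    L.contDiff x (by exact_mod_cast le_top) (norm_innerSL_le ℝ)).trans ?_
  calc _ ≤ ∑ i ∈ Finset.range (n + 1), (n.choose i : ℝ) * max ‖L x‖ ‖L‖ * max ‖L x‖ ‖L‖ := by
        gcongr with i
        · exact L.norm_iteratedFDeriv_le i x
        · exact L.norm_iteratedFDeriv_le (n - i) x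
    _ = 2 ^ n * max ‖L x‖ ‖L‖ ^ 2 := by
        rw [← Finset.sum_mul, ← Finset.sum_mul, ← Nat.cast_sum, Nat.sum_range_choose]
        push_cast; ring

lemma norm_iteratedFDeriv_one_sub_norm_sq_comp_le {k : ℕ} (hk : 1 ≤ k) {v : E}
    (hv : ‖L v‖ ≤ 1) :
    ‖iteratedFDeriv ℝ k (fun v => 1 - ‖L v‖ ^ 2) v‖ ≤ (2 * max 1 ‖L‖ ^ 2) ^ k := by
  rw [fun_iteratedFDeriv_sub_apply contDiffAt_const ((L.contDiff.norm_sq ℝ).contDiffAt),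
    iteratedFDeriv_const_of_ne (by omega), Pi.zero_apply, zero_sub, norm_neg]
  have hmax : max ‖L v‖ ‖L‖ ≤ max 1 ‖L‖ := max_le_max_right _ hv
  have hone : 1 ≤ max 1 ‖L‖ ^ 2 := one_le_pow₀ (le_max_left _ _)
  calc _ ≤ 2 ^ k * max ‖L v‖ ‖L‖ ^ 2 := norm_iteratedFDeriv_norm_sq_comp_le L k v
    _ ≤ 2 ^ k * (max 1 ‖L‖ ^ 2) ^ k := by
        gcongr
        exact (pow_le_pow_left₀ (by positivity) hmax 2).trans (le_self_pow₀ hone (by omega))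
    _ = (2 * max 1 ‖L‖ ^ 2) ^ k := (mul_pow _ _ _).symm

/-- Faà di Bruno applied to `(1 - ‖L v‖²)^(-1/2)`. -/
lemma norm_iteratedFDerivWithin_inv_sqrt_one_sub_le {i n : ℕ} (hi : i ≤ n) {v : E}
    (hv : ‖L v‖ < 1) :
    ‖iteratedFDerivWithin ℝ i (fun v => (√(1 - ‖L v‖ ^ 2))⁻¹) {v | ‖L v‖ < 1} v‖ ≤
      n ! * (n ! * (1 - ‖L v‖ ^ 2) ^ (-(1 / 2) - n : ℝ)) * (2 * max 1 ‖L‖ ^ 2) ^ n := by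
  set t := 1 - ‖L v‖ ^ 2
  have ht₀ : 0 < t := one_sub_norm_sq_pos hv
  have ht₁ : t ≤ 1 := by nlinarith [norm_nonneg (L v)]
  have hU := isOpen_setOf_norm_apply_lt_one L
  have hmaps : MapsTo (fun v => 1 - ‖L v‖ ^ 2) {v | ‖L v‖ < 1} (Ioi 0) :=
    fun v (hv : ‖L v‖ < 1) => one_sub_norm_sq_pos hv
  have hD : 1 ≤ 2 * max 1 ‖L‖ ^ 2 := by nlinarith [one_le_pow₀ (n := 2) (le_max_left 1 ‖L‖)]
  have hcomp := norm_iteratedFDerivWithin_comp_le (g := fun u : ℝ => (√u)⁻¹) (N := (⊤ : ℕ∞))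
    (fun u hu => ((contDiffAt_id.sqrt (ne_of_gt hu)).inv
      (Real.sqrt_pos.2 hu).ne').contDiffWithinAt)
    (contDiff_const.sub (L.contDiff.norm_sq ℝ)).contDiffOn (by exact_mod_cast le_top)
    (uniqueDiffOn_Ioi 0) hU.uniqueDiffOn hmaps hv (n := i)
    (C := n ! * t ^ (-(1 / 2) - n : ℝ)) (D := 2 * max 1 ‖L‖ ^ 2)
    (fun k hk => (norm_iteratedFDerivWithin_inv_sqrt_le k ht₀).trans <|
      mul_le_mul (mod_cast Nat.factorial_le (hk.trans hi))
        (Real.rpow_le_rpow_of_exponent_ge ht₀ ht₁ (by gcongr; exact_mod_cast hk.trans hi))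
        (by positivity) (by positivity))
    (fun k hk _ => by
      rw [iteratedFDerivWithin_of_isOpen k hU hv]
      exact norm_iteratedFDeriv_one_sub_norm_sq_comp_le L hk hv.le)
  refine hcomp.trans ?_
  gcongr

lemma norm_iteratedFDeriv_expandMap_le (n : ℕ) {v : E} (hv : ‖L v‖ < 1) :
    ‖iteratedFDeriv ℝ n (expandMap L) v‖ ≤
      2 ^ n * (n ! * (n ! * (1 - ‖L v‖ ^ 2) ^ (-(1 / 2) - n : ℝ)) * (2 * max 1 ‖L‖ ^ 2) ^ n) *
        max ‖v‖ 1 := by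
  have hU := isOpen_setOf_norm_apply_lt_one L
  have hid (k : ℕ) : ‖iteratedFDerivWithin ℝ k id {v | ‖L v‖ < 1} v‖ ≤ max ‖v‖ 1 := by
    rw [iteratedFDerivWithin_of_isOpen k hU hv]
    exact ((ContinuousLinearMap.id ℝ E).norm_iteratedFDeriv_le k v).trans
      (max_le_max_left _ ContinuousLinearMap.norm_id_le)
  rw [← iteratedFDerivWithin_of_isOpen n hU hv]
  refine (norm_iteratedFDerivWithin_smul_le (N := (⊤ : ℕ∞)) (contDiffOn_inv_sqrt_one_sub L)
    contDiffOn_id hU.uniqueDiffOn hv (by exact_mod_cast le_top)).trans ?_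
  calc _ ≤ ∑ i ∈ Finset.range (n + 1), (n.choose i : ℝ) *
        (n ! * (n ! * (1 - ‖L v‖ ^ 2) ^ (-(1 / 2) - n : ℝ)) * (2 * max 1 ‖L‖ ^ 2) ^ n) *
          max ‖v‖ 1 := by
        gcongr with i hi
        · have := one_sub_norm_sq_pos hv
          positivity
        · exact norm_iteratedFDerivWithin_inv_sqrt_one_sub_le L
            (Finset.mem_range_succ_iff.1 hi) hv
        · exact hid (n - i)
    _ = _ := by
        rw [← Finset.sum_mul, ← Finset.sum_mul, ← Nat.cast_sum, Nat.sum_range_choose]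
        push_cast; ring

/-- On `contractMap L '' ball 0 m` we have `(1 - ‖L v‖²)⁻¹ = 1 + ‖L w‖² ≤ (1 + ‖L‖²) m²`. -/
lemma one_sub_norm_sq_rpow_le {m : ℝ} (hm : 1 ≤ m) {v : E} (hv : v ∈ contractMap L '' ball 0 m)
    (n : ℕ) :
    (1 - ‖L v‖ ^ 2) ^ (-(1 / 2) - n : ℝ) ≤ (1 + ‖L‖ ^ 2) ^ (n + 1 / 2 : ℝ) * m ^ (2 * n + 1) := by
  obtain ⟨w, hw, rfl⟩ := hv
  have hpos : 0 < 1 + ‖L w‖ ^ 2 := by positivity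
  have hLw : ‖L w‖ ≤ ‖L‖ * m := L.le_opNorm_of_le (mem_ball_zero_iff.1 hw).le
  have hle : 1 + ‖L w‖ ^ 2 ≤ (1 + ‖L‖ ^ 2) * m ^ 2 := by
    nlinarith [pow_le_pow_left₀ (norm_nonneg _) hLw 2, one_le_pow₀ (n := 2) hm]
  have hm_pow : (m ^ 2) ^ (n + 1 / 2 : ℝ) = m ^ (2 * n + 1) := by
    rw [← Real.rpow_natCast m 2, ← Real.rpow_mul (by linarith), ← Real.rpow_natCast]
    push_cast; ring_nf
  rw [one_sub_norm_sq_apply_contractMap, Real.inv_rpow hpos.le, ← Real.rpow_neg hpos.le,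
    neg_sub, sub_neg_eq_add, ← hm_pow, ← Real.mul_rpow (by positivity) (by positivity)]
  exact Real.rpow_le_rpow hpos.le hle (by positivity)

def expandMapDerivBound (n : ℕ) : ℝ :=
  2 ^ n * (n ! * (n ! * (1 + ‖L‖ ^ 2) ^ (n + 1 / 2 : ℝ)) * (2 * max 1 ‖L‖ ^ 2) ^ n)

theorem norm_iteratedFDeriv_expandMap_le_of_mem_image (A : F →L[ℝ] E) (hA : ∀ v, A (L v) = v)
    (n : ℕ) {m : ℝ} (hm : 1 ≤ m) {v : E} (hv : v ∈ contractMap L '' ball 0 m) :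
    ‖iteratedFDeriv ℝ n (expandMap L) v‖ ≤
      expandMapDerivBound L n * max ‖A‖ 1 * m ^ (2 * n + 1) := by
  have hvU : ‖L v‖ < 1 := ((image_contractMap_ball L m).subset hv).1
  have hv_le : ‖v‖ ≤ ‖A‖ := by
    calc ‖v‖ = ‖A (L v)‖ := by rw [hA]
      _ ≤ ‖A‖ := (A.le_opNorm_of_le hvU.le).trans_eq (mul_one _)
  refine (norm_iteratedFDeriv_expandMap_le L n hvU).trans ?_
  calc _ ≤ 2 ^ n * (n ! * (n ! * ((1 + ‖L‖ ^ 2) ^ (n + 1 / 2 : ℝ) * m ^ (2 * n + 1))) *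
        (2 * max 1 ‖L‖ ^ 2) ^ n) * max ‖A‖ 1 := by
        gcongr
        exact one_sub_norm_sq_rpow_le L hm hv n
    _ = _ := by unfold expandMapDerivBound; ring

end Maps

theorem stmt_2 (M : Matrix (Fin 3) (Fin 3) ℝ) (hM : IsUnit M) :
    ∃ N > (0 : ℝ), ∀ m : ℝ, 1 ≤ m →
      -- 𝔚 restricted to the ball {|w| < m} is a C^∞ diffeomorphism onto its image,
      -- with inverse (the restriction of) invW
      Set.InjOn (frakW M) (Metric.ball (0 : E3) m) ∧
      IsOpen (frakW M '' Metric.ball (0 : E3) m) ∧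
      ContDiffOn ℝ (⊤ : ℕ∞) (frakW M) (Metric.ball (0 : E3) m) ∧
      ContDiffOn ℝ (⊤ : ℕ∞) (invW M) (frakW M '' Metric.ball (0 : E3) m) ∧
      (∀ w ∈ Metric.ball (0 : E3) m, invW M (frakW M w) = w) ∧
      (∀ v ∈ frakW M '' Metric.ball (0 : E3) m, frakW M (invW M v) = v) ∧
      -- derivative bounds for the inverse map
      (∀ j ∈ ({1, 2, 3} : Set ℕ), ∀ v ∈ frakW M '' Metric.ball (0 : E3) m,
        ‖iteratedFDeriv ℝ j (invW M) v‖ ≤ N * m ^ (2 * j + 1)) := by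
  set L := toEuclideanCLM (n := Fin 3) (𝕜 := ℝ) M
  set Linv := toEuclideanCLM (n := Fin 3) (𝕜 := ℝ) M⁻¹
  have hinv (v : E3) : Linv (L v) = v := by
    change (Linv * L) v = v
    rw [← map_mul, nonsing_inv_mul M ((isUnit_iff_isUnit_det M).1 hM), map_one]
    rfl
  have hbound_pos (j : ℕ) : 0 < expandMapDerivBound L j := by
    unfold expandMapDerivBound; positivity
  have hsum_pos : 0 < ∑ j ∈ Finset.range 4, expandMapDerivBound L j :=
    Finset.sum_pos (fun j _ => hbound_pos j) Finset.nonempty_range_add_one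
  refine ⟨(∑ j ∈ Finset.range 4, expandMapDerivBound L j) * max ‖Linv‖ 1,
    mul_pos hsum_pos (by positivity), fun m hm => ?_⟩
  rw [show frakW M = contractMap L from rfl, show invW M = expandMap L from rfl]
  have himage := image_contractMap_ball L m
  refine ⟨(Function.LeftInverse.injective (expandMap_contractMap L)).injOn,
    isOpen_image_contractMap_ball L m, (contDiff_contractMap L).contDiffOn,
    (contDiffOn_expandMap L).mono (himage ▸ inter_subset_left),
    fun w _ => expandMap_contractMap L w, fun v hv => contractMap_expandMap L (himage ▸ hv).1,
    fun j hj v hv => ?_⟩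
  have hj4 : j ∈ Finset.range 4 := by rcases hj with rfl | rfl | rfl <;> decide
  calc _ ≤ expandMapDerivBound L j * max ‖Linv‖ 1 * m ^ (2 * j + 1) :=
        norm_iteratedFDeriv_expandMap_le_of_mem_image L Linv hinv j hm hv
    _ ≤ _ := by
        gcongr
        exact Finset.single_le_sum (fun j _ => (hbound_pos j).le) hj4
end
end

section
/- Let M be an invertible real 3×3 matrix, 𝔚(w) = w/(1+|Mw|²)^{1/2}, and m ≥ 1. Then there exists N = N(M) > 0, independent of m, such that the matrix-valued map v ↦ (D𝔚)(𝔚⁻¹(v)), defined on 𝔚({|w| < m}), is differentiable and the norm of its derivative is bounded by N·m at every point of 𝔚({|w| < m}). -/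
/-!
STATEMENT 3: Let M be an invertible real 3×3 matrix, 𝔚(w) = w/(1+|Mw|²)^{1/2}, and
m ≥ 1. Then there exists N = N(M) > 0, independent of m, such that the matrix-valued
map v ↦ (D𝔚)(𝔚⁻¹(v)), defined on 𝔚({|w| < m}), is differentiable and the norm of its
derivative is bounded by N·m at every point of 𝔚({|w| < m}).
(Here D𝔚 is the total derivative (Jacobian) of 𝔚, and 𝔚⁻¹(v) = v/(1−|Mv|²)^{1/2} is
the inverse of the restriction of 𝔚 to the ball {|w| < m}.)
-/

noncomputable section
open Real Matrix
open scoped ENNReal NNReal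

/-!
Write `A` for `M` acting on `E3` and `s(v) = √(1 - ‖A v‖²)`. The map `𝔚` takes values in the
set `‖A v‖ < 1`, on which `𝔚⁻¹` is the radial expansion `v ↦ v / s(v)` and
`D𝔚 (𝔚⁻¹ v) = s(v) • (1 - ⟪A v, A ·⟫ • v)`, a smooth function of `v`. In its derivative every
term stays bounded except the one coming from `s`, whose derivative has size
`‖A v‖ ‖A‖ / s(v) = ‖A (𝔚⁻¹ v)‖ ‖A‖ ≤ ‖A‖² m`; the remaining factor `‖v‖` is at most `‖M⁻¹‖`
because `‖A v‖ < 1`.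
-/

open ContinuousLinearMap
open scoped RealInnerProductSpace Topology

section RadialMaps

variable {E F : Type*} [NormedAddCommGroup E] [InnerProductSpace ℝ E]
  [NormedAddCommGroup F] [InnerProductSpace ℝ F] (A : E →L[ℝ] F)

def radialContraction (w : E) : E := (√(1 + ‖A w‖ ^ 2))⁻¹ • w

def radialExpansion (v : E) : E := (√(1 - ‖A v‖ ^ 2))⁻¹ • v

lemma one_sub_norm_sq_radialContraction (w : E) :
    1 - ‖A (radialContraction A w)‖ ^ 2 = (1 + ‖A w‖ ^ 2)⁻¹ := by
  have hpos : 0 < 1 + ‖A w‖ ^ 2 := by positivity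
  rw [radialContraction, map_smul, norm_smul, mul_pow, norm_inv, Real.norm_eq_abs,
    abs_of_nonneg (Real.sqrt_nonneg _), inv_pow, Real.sq_sqrt hpos.le]
  field_simp
  ring

lemma norm_apply_radialContraction_lt_one (w : E) : ‖A (radialContraction A w)‖ < 1 := by
  have h : 0 < 1 - ‖A (radialContraction A w)‖ ^ 2 := by
    rw [one_sub_norm_sq_radialContraction]; positivity
  exact (pow_lt_one_iff_of_nonneg (norm_nonneg _) two_ne_zero).mp (by linarith)

lemma radialExpansion_radialContraction (w : E) :
    radialExpansion A (radialContraction A w) = w := by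
  have hpos : 0 < √(1 + ‖A w‖ ^ 2) := by positivity
  rw [radialExpansion, one_sub_norm_sq_radialContraction, Real.sqrt_inv, inv_inv,
    radialContraction, smul_smul, mul_inv_cancel₀ hpos.ne', one_smul]

lemma one_add_norm_sq_radialExpansion {v : E} (hv : ‖A v‖ < 1) :
    1 + ‖A (radialExpansion A v)‖ ^ 2 = (1 - ‖A v‖ ^ 2)⁻¹ := by
  have hpos : 0 < 1 - ‖A v‖ ^ 2 := by nlinarith [norm_nonneg (A v)]
  rw [radialExpansion, map_smul, norm_smul, mul_pow, norm_inv, Real.norm_eq_abs,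
    abs_of_nonneg (Real.sqrt_nonneg _), inv_pow, Real.sq_sqrt hpos.le]
  field_simp
  ring

lemma norm_apply_radialExpansion (v : E) :
    ‖A (radialExpansion A v)‖ = (√(1 - ‖A v‖ ^ 2))⁻¹ * ‖A v‖ := by
  rw [radialExpansion, map_smul, norm_smul, norm_inv, Real.norm_eq_abs,
    abs_of_nonneg (Real.sqrt_nonneg _)]

def gramRankOne : E →L[ℝ] E →L[ℝ] E →L[ℝ] E :=
  (smulRightL ℝ E E).comp (((compL ℝ E F ℝ).flip A).comp ((innerSL ℝ).comp A))

lemma gramRankOne_apply (a b x : E) : gramRankOne A a b x = ⟪A a, A x⟫ • b := rfl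

lemma norm_gramRankOne_le (a b : E) : ‖gramRankOne A a b‖ ≤ ‖A a‖ * ‖A‖ * ‖b‖ := by
  refine opNorm_le_bound _ (by positivity) fun x => ?_
  rw [gramRankOne_apply, norm_smul, Real.norm_eq_abs]
  calc |⟪A a, A x⟫| * ‖b‖ ≤ ‖A a‖ * (‖A‖ * ‖x‖) * ‖b‖ := by
        gcongr
        exact (abs_real_inner_le_norm _ _).trans (by gcongr; exact A.le_opNorm x)
    _ = ‖A a‖ * ‖A‖ * ‖b‖ * ‖x‖ := by ring

def radialJacobian (v : E) : E →L[ℝ] E :=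
  √(1 - ‖A v‖ ^ 2) • (1 - gramRankOne A v v)

lemma hasFDerivAt_radialContraction (w : E) :
    HasFDerivAt (radialContraction A)
      ((√(1 + ‖A w‖ ^ 2))⁻¹ • (1 - (1 + ‖A w‖ ^ 2)⁻¹ • gramRankOne A w w)) w := by
  have hpos : 0 < 1 + ‖A w‖ ^ 2 := by positivity
  have hr : 0 < √(1 + ‖A w‖ ^ 2) := Real.sqrt_pos.2 hpos
  have hsqrt := ((A.hasFDerivAt.norm_sq).const_add 1).sqrt hpos.ne'
  have hinv := (hasDerivAt_inv hr.ne').comp_hasFDerivAt w hsqrt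
  refine (hinv.smul (hasFDerivAt_id w)).congr_fderiv ?_
  ext x
  simp only [Function.comp_apply, one_div, neg_smul, _root_.add_apply, _root_.smul_apply,
    id_eq, id_apply, smulRight_apply, _root_.neg_apply, ContinuousLinearMap.comp_apply,
    coe_innerSL_apply, nsmul_eq_mul, Nat.cast_ofNat, smul_eq_mul, _root_.sub_apply,
    one_apply_eq_self, gramRankOne_apply, Real.sq_sqrt hpos.le]
  module

lemma hasFDerivAt_radialContraction_radialExpansion {v : E} (hv : ‖A v‖ < 1) :
    HasFDerivAt (radialContraction A) (radialJacobian A v) (radialExpansion A v) := by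
  have hpos : 0 < 1 - ‖A v‖ ^ 2 := by nlinarith [norm_nonneg (A v)]
  refine (hasFDerivAt_radialContraction A _).congr_fderiv ?_
  rw [one_add_norm_sq_radialExpansion A hv, Real.sqrt_inv, inv_inv, inv_inv, radialJacobian,
    radialExpansion, map_smul, map_smul, _root_.smul_apply, smul_smul]
  set s := √(1 - ‖A v‖ ^ 2) with hs
  have hs0 : s ≠ 0 := (Real.sqrt_pos.2 hpos).ne'
  rw [← Real.sq_sqrt hpos.le, ← hs]
  congr 2
  match_scalars
  field_simp

lemma fderiv_radialContraction_comp_radialExpansion_eventuallyEq {v : E} (hv : ‖A v‖ < 1) :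
    (fun v' => fderiv ℝ (radialContraction A) (radialExpansion A v')) =ᶠ[𝓝 v]
      radialJacobian A := by
  have hU : IsOpen {v' : E | ‖A v'‖ < 1} := isOpen_lt A.continuous.norm continuous_const
  filter_upwards [hU.mem_nhds hv] with v' hv'
  exact (hasFDerivAt_radialContraction_radialExpansion A hv').fderiv

lemma hasFDerivAt_sqrt_one_sub_norm_sq {v : E} (hv : ‖A v‖ < 1) :
    HasFDerivAt (fun x => √(1 - ‖A x‖ ^ 2))
      (-(√(1 - ‖A v‖ ^ 2))⁻¹ • (innerSL ℝ (A v)).comp A) v := by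
  have hpos : 0 < 1 - ‖A v‖ ^ 2 := by nlinarith [norm_nonneg (A v)]
  refine ((A.hasFDerivAt.norm_sq).const_sub 1).sqrt hpos.ne' |>.congr_fderiv ?_
  ext x
  simp only [one_div, _root_.smul_apply, _root_.neg_apply, nsmul_eq_mul, Nat.cast_ofNat,
    smul_eq_mul, ContinuousLinearMap.comp_apply, coe_innerSL_apply]
  field_simp

lemma exists_hasFDerivAt_radialJacobian {v : E} (hv : ‖A v‖ < 1) :
    ∃ D : E →L[ℝ] E →L[ℝ] E, HasFDerivAt (radialJacobian A) D v ∧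
      ‖D‖ ≤ ‖A‖ * (1 + ‖A‖ * ‖v‖) * (1 + ‖A (radialExpansion A v)‖) := by
  set s := √(1 - ‖A v‖ ^ 2)
  have hs0 : 0 < s := Real.sqrt_pos.2 (by nlinarith [norm_nonneg (A v)])
  have hs1 : s ≤ 1 := Real.sqrt_le_one.mpr (by nlinarith [norm_nonneg (A v)])
  have hL := (gramRankOne A).hasFDerivAt_of_bilinear (hasFDerivAt_id v) (hasFDerivAt_id v)
  set L' := (gramRankOne A).precompR E v (ContinuousLinearMap.id ℝ E) +
    (gramRankOne A).precompL E (ContinuousLinearMap.id ℝ E) v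
  set c' := -s⁻¹ • (innerSL ℝ (A v)).comp A
  refine ⟨_, (hasFDerivAt_sqrt_one_sub_norm_sq A hv).smul (hL.const_sub 1), ?_⟩
  have hL' : ‖L'‖ ≤ ‖A‖ * (‖A v‖ + ‖A‖ * ‖v‖) := by
    refine opNorm_le_bound _ (by positivity) fun u => ?_
    calc ‖L' u‖ = ‖gramRankOne A v u + gramRankOne A u v‖ := by simp [L']
      _ ≤ ‖A v‖ * ‖A‖ * ‖u‖ + ‖A u‖ * ‖A‖ * ‖v‖ :=
        norm_add_le_of_le (norm_gramRankOne_le A v u) (norm_gramRankOne_le A u v)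
      _ ≤ ‖A v‖ * ‖A‖ * ‖u‖ + ‖A‖ * ‖u‖ * ‖A‖ * ‖v‖ := by gcongr; exact A.le_opNorm u
      _ = ‖A‖ * (‖A v‖ + ‖A‖ * ‖v‖) * ‖u‖ := by ring
  have hc' : ‖c'‖ ≤ s⁻¹ * ‖A v‖ * ‖A‖ := by
    rw [norm_smul, norm_neg, norm_inv, Real.norm_of_nonneg hs0.le, mul_assoc]
    gcongr
    exact (opNorm_comp_le _ _).trans_eq (by rw [innerSL_apply_norm])
  have hId : ‖1 - gramRankOne A v v‖ ≤ 1 + ‖A v‖ * ‖A‖ * ‖v‖ :=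
    (norm_sub_le _ _).trans (add_le_add norm_id_le (norm_gramRankOne_le A v v))
  calc _ ≤ ‖s • -L'‖ + ‖c'.smulRight (1 - gramRankOne A v v)‖ := norm_add_le _ _
    _ ≤ s * (‖A‖ * (‖A v‖ + ‖A‖ * ‖v‖)) + s⁻¹ * ‖A v‖ * ‖A‖ * (1 + ‖A v‖ * ‖A‖ * ‖v‖) := by
      rw [norm_smul, norm_neg, Real.norm_of_nonneg hs0.le, norm_smulRight_apply]
      gcongr
    _ ≤ ‖A‖ * (1 + ‖A‖ * ‖v‖) * (1 + ‖A (radialExpansion A v)‖) := by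
      have hAv : ‖A v‖ ≤ 1 := hv.le
      have h1 : s * (‖A‖ * (‖A v‖ + ‖A‖ * ‖v‖)) ≤ 1 * (‖A‖ * (1 + ‖A‖ * ‖v‖)) := by gcongr
      have h2 : s⁻¹ * ‖A v‖ * ‖A‖ * (1 + ‖A v‖ * ‖A‖ * ‖v‖) ≤
          s⁻¹ * ‖A v‖ * ‖A‖ * (1 + 1 * ‖A‖ * ‖v‖) := by gcongr
      rw [norm_apply_radialExpansion]
      linarith

end RadialMaps

lemma frakW_eq_radialContraction (M : Matrix (Fin 3) (Fin 3) ℝ) :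
    frakW M = radialContraction (Matrix.toEuclideanCLM (𝕜 := ℝ) M) := rfl

lemma invW_eq_radialExpansion (M : Matrix (Fin 3) (Fin 3) ℝ) :
    invW M = radialExpansion (Matrix.toEuclideanCLM (𝕜 := ℝ) M) := rfl

theorem stmt_3 (M : Matrix (Fin 3) (Fin 3) ℝ) (hM : IsUnit M) :
    ∃ N > (0 : ℝ), ∀ m : ℝ, 1 ≤ m →
      ∀ v ∈ frakW M '' Metric.ball (0 : E3) m,
        DifferentiableAt ℝ (fun v' => fderiv ℝ (frakW M) (invW M v')) v ∧
        ‖fderiv ℝ (fun v' => fderiv ℝ (frakW M) (invW M v')) v‖ ≤ N * m := by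
  set A := Matrix.toEuclideanCLM (𝕜 := ℝ) M
  obtain ⟨B, hBA⟩ := (hM.map (Matrix.toEuclideanCLM (𝕜 := ℝ) (n := Fin 3))).exists_left_inv
  refine ⟨(1 + ‖A‖) ^ 2 * (1 + ‖A‖ * ‖B‖), by positivity, ?_⟩
  rintro m hm _ ⟨w, hw, rfl⟩
  rw [frakW_eq_radialContraction, invW_eq_radialExpansion]
  set v := radialContraction A w
  have hv : ‖A v‖ < 1 := norm_apply_radialContraction_lt_one A w
  have heq := fderiv_radialContraction_comp_radialExpansion_eventuallyEq A hv
  obtain ⟨D, hD, hDle⟩ := exists_hasFDerivAt_radialJacobian A hv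
  refine ⟨hD.differentiableAt.congr_of_eventuallyEq heq, ?_⟩
  have hvB : ‖v‖ ≤ ‖B‖ :=
    calc ‖v‖ = ‖B (A v)‖ := by rw [← mul_apply_eq_comp, hBA, one_apply_eq_self]
      _ ≤ ‖B‖ * ‖A v‖ := B.le_opNorm _
      _ ≤ ‖B‖ := mul_le_of_le_one_right (norm_nonneg _) hv.le
  have hAw : ‖A w‖ ≤ ‖A‖ * m := A.le_opNorm_of_le (mem_ball_zero_iff.mp hw).le
  rw [radialExpansion_radialContraction] at hDle
  rw [heq.fderiv_eq, hD.fderiv]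
  calc ‖D‖ ≤ ‖A‖ * (1 + ‖A‖ * ‖B‖) * (1 + ‖A‖ * m) := hDle.trans (by gcongr)
    _ ≤ (1 + ‖A‖) * (1 + ‖A‖ * ‖B‖) * ((1 + ‖A‖) * m) := by gcongr <;> nlinarith [norm_nonneg A]
    _ = (1 + ‖A‖) ^ 2 * (1 + ‖A‖ * ‖B‖) * m := by ring
end
end

section
/- Given ρ₁, ρ₂ ∈ ℝ, let M = M(ρ₁,ρ₂) be the 3×3 real matrix with rows (1, 0, −ρ₁), (0, 1, −ρ₂), (ρ₁, ρ₂, 1) (note det M = 1 + ρ₁² + ρ₂² > 0), and let 𝐑 = diag(1, 1, −1). For w ∈ ℝ³ set p(w) = Mw and p̂₀(w) = (1+|Mw|²)^{1/2}. For w ≠ w′, define the 3×3 matrix Ξ(w, w′) = M⁻¹ Φ(P̂(w), P̂(w′)) M⁻ᵀ, where Φ is the Belyaev–Budker kernel evaluated at momenta p = p(w), q = p(w′) (so p₀ = p̂₀(w), q₀ = p̂₀(w′)). Then for i ∈ {1, 2} and all w ≠ w′: Ξ^{i3}(w, w′) = − Ξ^{i3}(𝐑w, 𝐑w′). -/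
noncomputable section
open Real Matrix MeasureTheory
open scoped ENNReal NNReal

/-- `p₀ = (1 + |p|²)^{1/2}`. -/
def pzero (p : Fin 3 → ℝ) : ℝ := Real.sqrt (1 + ‖toE3 p‖ ^ 2)

/-- The Lorentzian product `P·Q = p₀ q₀ − p·q`. -/
def lorPQ (p q : Fin 3 → ℝ) : ℝ := pzero p * pzero q - p ⬝ᵥ q

/-- `Λ(P,Q) = (P·Q)² ((P·Q)² − 1)^{−3/2}`. -/
def Lambda (p q : Fin 3 → ℝ) : ℝ :=
  (lorPQ p q) ^ 2 * ((lorPQ p q) ^ 2 - 1) ^ (-(3 : ℝ) / 2)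

/-- `S(P,Q) = ((P·Q)² − 1) I₃ − (p−q)⊗(p−q) + (P·Q − 1)(p⊗q + q⊗p)`. -/
def SPQ (p q : Fin 3 → ℝ) : Matrix (Fin 3) (Fin 3) ℝ :=
  ((lorPQ p q) ^ 2 - 1) • (1 : Matrix (Fin 3) (Fin 3) ℝ)
    - vecMulVec (p - q) (p - q)
    + (lorPQ p q - 1) • (vecMulVec p q + vecMulVec q p)

/-- The Belyaev–Budker kernel `Φ(P,Q) = (Λ(P,Q)/(p₀ q₀)) S(P,Q)`. -/
def Phi (p q : Fin 3 → ℝ) : Matrix (Fin 3) (Fin 3) ℝ :=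
  (Lambda p q / (pzero p * pzero q)) • SPQ p q

/-- The partial derivative `∂_{x_i} f (x)`. -/
def pd (i : Fin 3) (f : (Fin 3 → ℝ) → ℝ) (x : Fin 3 → ℝ) : ℝ :=
  fderiv ℝ f x (Pi.single i 1)

/-!
STATEMENT 6: Given ρ₁, ρ₂ ∈ ℝ, let M = M(ρ₁,ρ₂) be the 3×3 real matrix with rows
(1, 0, −ρ₁), (0, 1, −ρ₂), (ρ₁, ρ₂, 1) and let 𝐑 = diag(1, 1, −1). For w ∈ ℝ³ set
p(w) = Mw. For w ≠ w′, define Ξ(w, w′) = M⁻¹ Φ(P̂(w), P̂(w′)) M⁻ᵀ, where Φ is the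
Belyaev–Budker kernel at momenta p = Mw, q = Mw′. Then for i ∈ {1, 2} and all
w ≠ w′: Ξ^{i3}(w, w′) = − Ξ^{i3}(𝐑w, 𝐑w′).
-/

/-- The matrix with rows (1, 0, −ρ₁), (0, 1, −ρ₂), (ρ₁, ρ₂, 1). -/
def Mmat (ρ₁ ρ₂ : ℝ) : Matrix (Fin 3) (Fin 3) ℝ :=
  !![1, 0, -ρ₁; 0, 1, -ρ₂; ρ₁, ρ₂, 1]

/-- The reflection matrix 𝐑 = diag(1, 1, −1). -/
def Rmat : Matrix (Fin 3) (Fin 3) ℝ := !![1, 0, 0; 0, 1, 0; 0, 0, -1]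

/-- `Ξ(w, w′) = M⁻¹ Φ(P̂(w), P̂(w′)) M⁻ᵀ`. -/
def Xi (ρ₁ ρ₂ : ℝ) (w w' : Fin 3 → ℝ) : Matrix (Fin 3) (Fin 3) ℝ :=
  (Mmat ρ₁ ρ₂)⁻¹ * Phi ((Mmat ρ₁ ρ₂).mulVec w) ((Mmat ρ₁ ρ₂).mulVec w') * ((Mmat ρ₁ ρ₂)⁻¹)ᵀ

/-!
The Gram matrix `MᵀM = I + KᵀK` (with `K = M - I` skew) is block-diagonal for `ℝ² ⊕ ℝ`, so `𝐑`
preserves it and `O = M𝐑M⁻¹` is orthogonal, with `p(𝐑w) = O p(w)`. The kernel is built from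
`p₀`, `q₀`, `p·q` and rank-one tensors, hence `Φ(Op, Oq) = O Φ(p, q) Oᵀ`, which gives
`Ξ(𝐑w, 𝐑w′) = 𝐑 Ξ(w, w′) 𝐑`. Conjugation by `𝐑` flips the sign of the entries `(i, 3)`, `i ≤ 2`.
-/

namespace Matrix

variable {n R : Type*} [Fintype n] [CommRing R]

lemma vecMulVec_mulVec_mulVec (A : Matrix n n R) (u v : n → R) :
    vecMulVec (A *ᵥ u) (A *ᵥ v) = A * vecMulVec u v * Aᵀ := by
  rw [mul_vecMulVec, vecMulVec_mul, vecMul_transpose]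

variable [DecidableEq n]

lemma dotProduct_mulVec_mulVec_of_transpose_mul_self {O : Matrix n n R} (hO : Oᵀ * O = 1)
    (u v : n → R) : O *ᵥ u ⬝ᵥ O *ᵥ v = u ⬝ᵥ v := by
  rw [dotProduct_mulVec, ← vecMul_transpose, vecMul_vecMul, hO, vecMul_one]

lemma transpose_mul_self_of_conj {A B : Matrix n n R} (hA : IsUnit A.det)
    (hB : Bᵀ * (Aᵀ * A) * B = Aᵀ * A) :
    (A * B * A⁻¹)ᵀ * (A * B * A⁻¹) = 1 := by
  calc (A * B * A⁻¹)ᵀ * (A * B * A⁻¹) = A⁻¹ᵀ * (Bᵀ * (Aᵀ * A) * B) * A⁻¹ := by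
        simp only [transpose_mul, Matrix.mul_assoc]
    _ = (A * A⁻¹)ᵀ * (A * A⁻¹) := by
        rw [hB, transpose_mul]; simp only [Matrix.mul_assoc]
    _ = 1 := by rw [mul_nonsing_inv A hA, transpose_one, Matrix.one_mul]

end Matrix

lemma pzero_eq_sqrt (p : Fin 3 → ℝ) : pzero p = √(1 + p ⬝ᵥ p) := by
  rw [pzero, toE3, EuclideanSpace.real_norm_sq_eq]
  simp [dotProduct, sq]

section OrthogonalCovariance

variable {O : Matrix (Fin 3) (Fin 3) ℝ}

lemma pzero_mulVec (hO : Oᵀ * O = 1) (p : Fin 3 → ℝ) : pzero (O *ᵥ p) = pzero p := by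
  rw [pzero_eq_sqrt, pzero_eq_sqrt, dotProduct_mulVec_mulVec_of_transpose_mul_self hO]

lemma lorPQ_mulVec (hO : Oᵀ * O = 1) (p q : Fin 3 → ℝ) :
    lorPQ (O *ᵥ p) (O *ᵥ q) = lorPQ p q := by
  rw [lorPQ, lorPQ, pzero_mulVec hO, pzero_mulVec hO,
    dotProduct_mulVec_mulVec_of_transpose_mul_self hO]

lemma Lambda_mulVec (hO : Oᵀ * O = 1) (p q : Fin 3 → ℝ) :
    Lambda (O *ᵥ p) (O *ᵥ q) = Lambda p q := by
  rw [Lambda, Lambda, lorPQ_mulVec hO]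

lemma SPQ_mulVec (hO : Oᵀ * O = 1) (p q : Fin 3 → ℝ) :
    SPQ (O *ᵥ p) (O *ᵥ q) = O * SPQ p q * Oᵀ := by
  have hO' : O * Oᵀ = 1 := mul_eq_one_comm.mp hO
  rw [SPQ, SPQ, lorPQ_mulVec hO, ← mulVec_sub, vecMulVec_mulVec_mulVec,
    vecMulVec_mulVec_mulVec, vecMulVec_mulVec_mulVec]
  simp only [Matrix.mul_add, Matrix.add_mul, Matrix.mul_sub, Matrix.sub_mul, Matrix.mul_smul,
    Matrix.smul_mul, Matrix.mul_one, hO']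

lemma Phi_mulVec (hO : Oᵀ * O = 1) (p q : Fin 3 → ℝ) :
    Phi (O *ᵥ p) (O *ᵥ q) = O * Phi p q * Oᵀ := by
  rw [Phi, Phi, Lambda_mulVec hO, pzero_mulVec hO, pzero_mulVec hO, SPQ_mulVec hO,
    Matrix.mul_smul, Matrix.smul_mul]

end OrthogonalCovariance

lemma isUnit_det_Mmat (ρ₁ ρ₂ : ℝ) : IsUnit (Mmat ρ₁ ρ₂).det := by
  have hdet : (Mmat ρ₁ ρ₂).det = 1 + ρ₁ ^ 2 + ρ₂ ^ 2 := by
    simp only [Mmat, det_fin_three, of_apply, cons_val, cons_val_zero, cons_val_one]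
    ring
  rw [hdet]
  exact isUnit_iff_ne_zero.mpr (by positivity)

lemma transpose_Rmat : Rmatᵀ = Rmat := by
  ext i j; fin_cases i <;> fin_cases j <;> simp [Rmat]

lemma Rmat_conj_gram_Mmat (ρ₁ ρ₂ : ℝ) :
    Rmatᵀ * ((Mmat ρ₁ ρ₂)ᵀ * Mmat ρ₁ ρ₂) * Rmat = (Mmat ρ₁ ρ₂)ᵀ * Mmat ρ₁ ρ₂ := by
  ext i j; fin_cases i <;> fin_cases j <;> simp [Rmat, Mmat, mul_apply, Fin.sum_univ_three]

lemma Xi_mulVec_Rmat (ρ₁ ρ₂ : ℝ) (w w' : Fin 3 → ℝ) :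
    Xi ρ₁ ρ₂ (Rmat *ᵥ w) (Rmat *ᵥ w') = Rmat * Xi ρ₁ ρ₂ w w' * Rmat := by
  simp only [Xi]
  set M := Mmat ρ₁ ρ₂
  have hM : IsUnit M.det := isUnit_det_Mmat ρ₁ ρ₂
  set O := M * Rmat * M⁻¹ with hOdef
  have hO : Oᵀ * O = 1 := transpose_mul_self_of_conj hM (Rmat_conj_gram_Mmat ρ₁ ρ₂)
  have hOM (v : Fin 3 → ℝ) : M *ᵥ (Rmat *ᵥ v) = O *ᵥ (M *ᵥ v) := by
    rw [mulVec_mulVec, mulVec_mulVec, hOdef, Matrix.mul_assoc, nonsing_inv_mul M hM,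
      Matrix.mul_one]
  have hMO : M⁻¹ * O = Rmat * M⁻¹ := by
    rw [hOdef, ← Matrix.mul_assoc, ← Matrix.mul_assoc, nonsing_inv_mul M hM, Matrix.one_mul]
  clear_value O
  calc M⁻¹ * Phi (M *ᵥ Rmat *ᵥ w) (M *ᵥ Rmat *ᵥ w') * M⁻¹ᵀ
      = (M⁻¹ * O) * Phi (M *ᵥ w) (M *ᵥ w') * (M⁻¹ * O)ᵀ := by
        rw [hOM, hOM, Phi_mulVec hO, transpose_mul]; simp only [Matrix.mul_assoc]
    _ = Rmat * (M⁻¹ * Phi (M *ᵥ w) (M *ᵥ w') * M⁻¹ᵀ) * Rmat := by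
        rw [hMO, transpose_mul, transpose_Rmat]; simp only [Matrix.mul_assoc]

lemma Rmat_mul_mul_Rmat_apply_two (A : Matrix (Fin 3) (Fin 3) ℝ) {i : Fin 3}
    (hi : i = 0 ∨ i = 1) : (Rmat * A * Rmat) i 2 = -A i 2 := by
  rcases hi with rfl | rfl <;> simp [Rmat, mul_apply, vecMul, dotProduct, Fin.sum_univ_three]

theorem stmt_6_general (ρ₁ ρ₂ : ℝ) (w w' : Fin 3 → ℝ)
    (i : Fin 3) (hi : i = 0 ∨ i = 1) :
    Xi ρ₁ ρ₂ w w' i 2 = - Xi ρ₁ ρ₂ (Rmat.mulVec w) (Rmat.mulVec w') i 2 := by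
  rw [Xi_mulVec_Rmat, Rmat_mul_mul_Rmat_apply_two _ hi, neg_neg]

theorem stmt_6 (ρ₁ ρ₂ : ℝ) (w w' : Fin 3 → ℝ) (hww' : w ≠ w')
    (i : Fin 3) (hi : i = 0 ∨ i = 1) :
    Xi ρ₁ ρ₂ w w' i 2 = - Xi ρ₁ ρ₂ (Rmat.mulVec w) (Rmat.mulVec w') i 2 :=
  stmt_6_general ρ₁ ρ₂ w w' i hi
end
end
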